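/- Let ε ∈ (0,1), k ≥ 1, let Q ⊆ [n] with |Q| ≤ k, and let c : {0,1}^n → {−1,1} satisfy Inf_i(c) = 0 for every i ∉ Q. Suppose real numbers α_1, …, α_n satisfy |α_i − Inf_i(c)| ≤ ε/(5k) for every i ∈ [n], and define T = {i ∈ [n] : α_i ≥ ε/(4k)}. Then T ⊆ Q and Σ_{i ∈ [n]\T} Inf_i(c) ≤ ε/2. -/

import Mathlib

open Finset

/-- The character `χ_S(x) = (-1)^{S·x}` on the Boolean cube. -/
noncomputable def chi {n : ℕ} (S x : Fin n → ZMod 2) : ℝ :=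
  (-1 : ℝ) ^ (∑ i, S i * x i).val

/-- The Fourier coefficient `f̂(S) = 2^{-n} Σ_x f(x) (-1)^{S·x}`. -/
noncomputable def fhat {n : ℕ} (f : (Fin n → ZMod 2) → ℝ)
    (S : Fin n → ZMod 2) : ℝ :=
  (2 ^ n : ℝ)⁻¹ * ∑ x : Fin n → ZMod 2, f x * chi S x

/-- The `i`-th influence `Inf_i(f) = Σ_{S : S_i = 1} f̂(S)²`. -/
noncomputable def influence {n : ℕ} (i : Fin n) (f : (Fin n → ZMod 2) → ℝ) : ℝ :=
  ∑ S ∈ Finset.univ.filter (fun S : Fin n → ZMod 2 => S i = 1), fhat f S ^ 2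

/-!
Since every estimate is within `ε/(5k)` of the true influence and `ε/(5k) < ε/(4k)`, a coordinate
of influence zero can never pass the threshold `ε/(4k)`, so `T ⊆ Q`. A coordinate rejected by the
threshold has influence below `ε/(4k) + ε/(5k)`, and only the at most `k` coordinates of `Q`
contribute to the sum, which is therefore at most `k (ε/(4k) + ε/(5k)) = 9ε/20`.
-/

section ThresholdSelection

variable {ι : Type*} [Fintype ι] {f α : ι → ℝ} {Q : Finset ι} {δ τ : ℝ}

theorem filter_le_subset_of_abs_sub_le (hf : ∀ i ∉ Q, f i = 0) (hα : ∀ i, |α i - f i| ≤ δ)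
    (hδτ : δ < τ) : univ.filter (fun i => τ ≤ α i) ⊆ Q := by
  intro i hi
  by_contra hiQ
  have hαi : α i ≤ δ := by simpa [hf i hiQ] using (abs_le.mp (hα i)).2
  have hτα : τ ≤ α i := (mem_filter.mp hi).2
  linarith

theorem sum_compl_filter_le_card_mul [DecidableEq ι] (hf : ∀ i ∉ Q, f i = 0) (hα : ∀ i, |α i - f i| ≤ δ)
    (hτδ : 0 ≤ τ + δ) :
    ∑ i ∈ (univ.filter (fun i => τ ≤ α i))ᶜ, f i ≤ #Q * (τ + δ) := by
  set T := univ.filter (fun i => τ ≤ α i)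
  have hbound : ∀ i ∈ Tᶜ ∩ Q, f i ≤ τ + δ := fun i hi => by
    have hατ : α i < τ := by simpa [T] using (mem_inter.mp hi).1
    linarith [(abs_le.mp (hα i)).1]
  calc ∑ i ∈ Tᶜ, f i = ∑ i ∈ Tᶜ ∩ Q, f i :=
        (sum_subset inter_subset_left fun i hi hiTQ =>
          hf i fun hiQ => hiTQ (mem_inter.mpr ⟨hi, hiQ⟩)).symm
    _ ≤ #(Tᶜ ∩ Q) * (τ + δ) := by
        simpa only [sum_const, nsmul_eq_mul] using sum_le_sum hbound
    _ ≤ #Q * (τ + δ) := by gcongr; exact inter_subset_right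

end ThresholdSelection

theorem stmt10_general {n : ℕ} (ε : ℝ) (hε : ε ∈ Set.Ioo (0 : ℝ) 1) (k : ℕ)
    (hk : 1 ≤ k) (Q : Finset (Fin n)) (hQ : Q.card ≤ k)
    (c : (Fin n → ZMod 2) → ℝ)
    (hinf : ∀ i, i ∉ Q → influence i c = 0)
    (α : Fin n → ℝ) (hα : ∀ i, |α i - influence i c| ≤ ε / (5 * k)) :
    (Finset.univ.filter (fun i : Fin n => ε / (4 * k) ≤ α i)) ⊆ Q ∧
    ∑ i ∈ (Finset.univ.filter (fun i : Fin n => ε / (4 * k) ≤ α i))ᶜ,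
      influence i c ≤ ε / 2 := by
  obtain ⟨hε0, -⟩ := hε
  have hkpos : (0 : ℝ) < k := by exact_mod_cast hk
  have hδτ : ε / (5 * k) < ε / (4 * k) := by gcongr; norm_num
  have hkτδ : (k : ℝ) * (ε / (4 * k) + ε / (5 * k)) = 9 / 20 * ε := by field_simp; ring
  refine ⟨filter_le_subset_of_abs_sub_le hinf hα hδτ, ?_⟩
  calc _ ≤ #Q * (ε / (4 * k) + ε / (5 * k)) :=
        sum_compl_filter_le_card_mul hinf hα (by positivity)
    _ ≤ k * (ε / (4 * k) + ε / (5 * k)) := by gcongr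
    _ ≤ ε / 2 := by linarith

/-- First phase of the junta-learning algorithm: for a `k`-junta `c` on the
coordinates `Q` (so `Inf_i(c) = 0` for `i ∉ Q`, `|Q| ≤ k`), if `α_i` estimates
`Inf_i(c)` to within `ε/(5k)` for every `i`, then the set
`T = {i : α_i ≥ ε/(4k)}` satisfies `T ⊆ Q` and `Σ_{i ∉ T} Inf_i(c) ≤ ε/2`. -/
theorem stmt10 {n : ℕ} (ε : ℝ) (hε : ε ∈ Set.Ioo (0 : ℝ) 1) (k : ℕ)
    (hk : 1 ≤ k) (Q : Finset (Fin n)) (hQ : Q.card ≤ k)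
    (c : (Fin n → ZMod 2) → ℝ) (hc : ∀ x, c x = 1 ∨ c x = -1)
    (hinf : ∀ i, i ∉ Q → influence i c = 0)
    (α : Fin n → ℝ) (hα : ∀ i, |α i - influence i c| ≤ ε / (5 * k)) :
    (Finset.univ.filter (fun i : Fin n => ε / (4 * k) ≤ α i)) ⊆ Q ∧
    ∑ i ∈ (Finset.univ.filter (fun i : Fin n => ε / (4 * k) ≤ α i))ᶜ,
      influence i c ≤ ε / 2 :=
  stmt10_general ε hε k hk Q hQ c hinf α hα
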